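/- Let X be a nonempty Tychonoff space. The assignment F ↦ μ_F, where μ_F(f) := inf{βf(x) : x ∈ F} for f ∈ C*(X), is a bijection from the collection of all nonempty closed subsets of βX onto R_min(X), and S(μ_F) = F for every nonempty closed F ⊆ βX. Moreover, it restricts to a bijection from {F : F nonempty compact, F ⊆ η(X)} onto R_min(X)_c. -/

import Mathlib

open Set

/-- The Čech–Stone extension `βf : βX → ℝ` of a bounded continuous function `f : X → ℝ`
(obtained by extending `f`, viewed as a map into the compact interval `[-‖f‖, ‖f‖]`,
over the Stone–Čech compactification). -/
noncomputable def betaExt {X : Type*} [TopologicalSpace X] (f : BoundedContinuousFunction X ℝ) :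
    StoneCech X → ℝ :=
  Subtype.val ∘ stoneCechExtend
    (Continuous.subtype_mk f.continuous
      (fun x => Set.mem_Icc.mpr (abs_le.mp (Real.norm_eq_abs (f x) ▸ f.norm_coe_le_norm x)))
      : Continuous fun x => (⟨f x, _⟩ : Set.Icc (-‖f‖) ‖f‖))

variable {X : Type*} [TopologicalSpace X]

/-- `μ` is *normed*: `μ 1 = 1`. -/
def BNormed (μ : BoundedContinuousFunction X ℝ → ℝ) : Prop := μ 1 = 1

/-- `μ` is *weakly additive*: `μ (f + c·1) = μ f + c`. -/
def BWeaklyAdditive (μ : BoundedContinuousFunction X ℝ → ℝ) : Prop :=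
  ∀ (f : BoundedContinuousFunction X ℝ) (c : ℝ),
    μ (f + BoundedContinuousFunction.const X c) = μ f + c

/-- `μ` *preserves min*. -/
def BPreservesMin (μ : BoundedContinuousFunction X ℝ → ℝ) : Prop :=
  ∀ f g : BoundedContinuousFunction X ℝ, μ (f ⊓ g) = min (μ f) (μ g)

/-- `μ` *preserves max*. -/
def BPreservesMax (μ : BoundedContinuousFunction X ℝ → ℝ) : Prop :=
  ∀ f g : BoundedContinuousFunction X ℝ, μ (f ⊔ g) = max (μ f) (μ g)

/-- `μ` *weakly preserves min*: `μ (min{f, c·1}) = min{μ f, c}`. -/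
def BWeaklyPreservesMin (μ : BoundedContinuousFunction X ℝ → ℝ) : Prop :=
  ∀ (f : BoundedContinuousFunction X ℝ) (c : ℝ),
    μ (f ⊓ BoundedContinuousFunction.const X c) = min (μ f) c

/-- `μ` *weakly preserves max*: `μ (max{f, c·1}) = max{μ f, c}`. -/
def BWeaklyPreservesMax (μ : BoundedContinuousFunction X ℝ → ℝ) : Prop :=
  ∀ (f : BoundedContinuousFunction X ℝ) (c : ℝ),
    μ (f ⊔ BoundedContinuousFunction.const X c) = max (μ f) c

/-- The support `S(μ) ⊆ βX` of a functional `μ` on `C*(X)`: points `p ∈ βX` such that every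
open neighbourhood `O` of `p` admits `f, g ∈ C*(X)` with `βf = βg` off `O` and `μ f ≠ μ g`. -/
def betaSupport (μ : BoundedContinuousFunction X ℝ → ℝ) : Set (StoneCech X) :=
  {p | ∀ O : Set (StoneCech X), IsOpen O → p ∈ O →
    ∃ f g : BoundedContinuousFunction X ℝ,
      (∀ q ∉ O, betaExt f q = betaExt g q) ∧ μ f ≠ μ g}

/-- `R_min(X)`: normed, weakly additive functionals preserving min and weakly preserving max. -/
def RMin (X : Type*) [TopologicalSpace X] : Set (BoundedContinuousFunction X ℝ → ℝ) :=
  {μ | BNormed μ ∧ BWeaklyAdditive μ ∧ BPreservesMin μ ∧ BWeaklyPreservesMax μ}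

/-- `R_max(X)`: normed, weakly additive functionals preserving max and weakly preserving min. -/
def RMax (X : Type*) [TopologicalSpace X] : Set (BoundedContinuousFunction X ℝ → ℝ) :=
  {μ | BNormed μ ∧ BWeaklyAdditive μ ∧ BPreservesMax μ ∧ BWeaklyPreservesMin μ}

/-- `R_min(X)_c`: members of `R_min(X)` with compact support, i.e. `∅ ≠ S(μ) ⊆ η(X)`. -/
def RMinC (X : Type*) [TopologicalSpace X] : Set (BoundedContinuousFunction X ℝ → ℝ) :=
  {μ | μ ∈ RMin X ∧ (betaSupport μ).Nonempty ∧
    betaSupport μ ⊆ Set.range (stoneCechUnit : X → StoneCech X)}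

/-- `R_max(X)_c`: members of `R_max(X)` with compact support, i.e. `∅ ≠ S(μ) ⊆ η(X)`. -/
def RMaxC (X : Type*) [TopologicalSpace X] : Set (BoundedContinuousFunction X ℝ → ℝ) :=
  {μ | μ ∈ RMax X ∧ (betaSupport μ).Nonempty ∧
    betaSupport μ ⊆ Set.range (stoneCechUnit : X → StoneCech X)}

/-!
A functional `μ ∈ R_min(X)` is recovered as `μ_F` for `F = ⋂ g, {p | μ g ≤ βg p}`.
The heart of the matter is that for all `f, g` some `p ∈ βX` has `βf p ≤ μ f` and
`μ g ≤ βg p`. Otherwise compactness of `βX` separates the two conditions by a margin `ε`, and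
then `max (L • f + const) c`, for a steep enough slope `L`, dominates `g` while `μ` gives it the
value `c = μ g - ε`; this uses that `μ` is positively homogeneous, which follows from weak
additivity and (weak) preservation of `min` and `max`. As the superlevel sets `{μ g ≤ βg}` form a
directed family of closed sets, compactness then yields, for each `f`, a point of `F` with
`βf ≤ μ f`. Conversely, Urysohn functions on `βX` show `S(μ_F) = F`, whence injectivity.
-/

lemma continuous_betaExt (f : BoundedContinuousFunction X ℝ) : Continuous (betaExt f) :=
  continuous_subtype_val.comp (continuous_stoneCechExtend _)

lemma betaExt_mem_Icc (f : BoundedContinuousFunction X ℝ) (p : StoneCech X) :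
    betaExt f p ∈ Icc (-‖f‖) ‖f‖ := by
  rw [betaExt, Function.comp_apply]
  exact Subtype.prop _

lemma betaExt_stoneCechUnit (f : BoundedContinuousFunction X ℝ) (x : X) :
    betaExt f (stoneCechUnit x) = f x :=
  congrArg Subtype.val (congrFun (stoneCechExtend_extends _) x)

lemma betaExt_eq_of_continuous {f : BoundedContinuousFunction X ℝ} {G : StoneCech X → ℝ}
    (hG : Continuous G) (h : ∀ x, G (stoneCechUnit x) = f x) : betaExt f = G :=
  denseRange_stoneCechUnit.equalizer (continuous_betaExt f) hG
    (funext fun x => (betaExt_stoneCechUnit f x).trans (h x).symm)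

lemma betaExt_const (c : ℝ) : betaExt (BoundedContinuousFunction.const X c) = fun _ => c :=
  betaExt_eq_of_continuous continuous_const fun _ => rfl

lemma betaExt_one : betaExt (1 : BoundedContinuousFunction X ℝ) = fun _ => 1 :=
  betaExt_const 1

lemma betaExt_add_const (f : BoundedContinuousFunction X ℝ) (c : ℝ) :
    betaExt (f + BoundedContinuousFunction.const X c) = fun p => betaExt f p + c :=
  betaExt_eq_of_continuous ((continuous_betaExt f).add continuous_const)
    fun x => by simp [betaExt_stoneCechUnit]

lemma betaExt_inf (f g : BoundedContinuousFunction X ℝ) :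
    betaExt (f ⊓ g) = fun p => min (betaExt f p) (betaExt g p) :=
  betaExt_eq_of_continuous ((continuous_betaExt f).min (continuous_betaExt g))
    fun x => by simp [betaExt_stoneCechUnit]

lemma betaExt_sup_const (f : BoundedContinuousFunction X ℝ) (c : ℝ) :
    betaExt (f ⊔ BoundedContinuousFunction.const X c) = fun p => max (betaExt f p) c :=
  betaExt_eq_of_continuous ((continuous_betaExt f).max continuous_const)
    fun x => by simp [betaExt_stoneCechUnit]

noncomputable def restrictStoneCech (G : C(StoneCech X, ℝ)) : BoundedContinuousFunction X ℝ :=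
  (BoundedContinuousFunction.mkOfCompact G).compContinuous ⟨stoneCechUnit, continuous_stoneCechUnit⟩

lemma betaExt_restrictStoneCech (G : C(StoneCech X, ℝ)) : betaExt (restrictStoneCech G) = G :=
  betaExt_eq_of_continuous G.continuous fun _ => rfl

lemma BoundedContinuousFunction.le_def {α : Type*} [TopologicalSpace α]
    {f g : BoundedContinuousFunction α ℝ} : f ≤ g ↔ ∀ x, f x ≤ g x :=
  Iff.rfl

/-- The functional `μ_F` of the statement. -/
noncomputable def betaInf (F : Set (StoneCech X)) (f : BoundedContinuousFunction X ℝ) : ℝ :=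
  sInf (betaExt f '' F)

section BetaInf

variable {F : Set (StoneCech X)} {f g : BoundedContinuousFunction X ℝ}

lemma bddBelow_betaExt_image (f : BoundedContinuousFunction X ℝ) (F : Set (StoneCech X)) :
    BddBelow (betaExt f '' F) :=
  ⟨-‖f‖, forall_mem_image.2 fun q _ => (betaExt_mem_Icc f q).1⟩

lemma betaInf_le {p : StoneCech X} (hp : p ∈ F) : betaInf F f ≤ betaExt f p :=
  csInf_le (bddBelow_betaExt_image f F) (mem_image_of_mem _ hp)

lemma le_betaInf (hF : F.Nonempty) {c : ℝ} (h : ∀ p ∈ F, c ≤ betaExt f p) : c ≤ betaInf F f :=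
  le_csInf (hF.image _) (forall_mem_image.2 h)

lemma betaInf_mono (hF : F.Nonempty) (h : ∀ p, betaExt f p ≤ betaExt g p) :
    betaInf F f ≤ betaInf F g :=
  le_betaInf hF fun p hp => (betaInf_le hp).trans (h p)

lemma betaInf_of_betaExt_eq_comp (hF : F.Nonempty) {φ : ℝ → ℝ} (hφ : Continuous φ)
    (hφm : Monotone φ) (h : betaExt g = φ ∘ betaExt f) : betaInf F g = φ (betaInf F f) := by
  rw [betaInf, betaInf, h, image_comp]
  exact (hφm.map_csInf_of_continuousAt hφ.continuousAt (hF.image _)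
    (bddBelow_betaExt_image f F)).symm

lemma betaInf_one (hF : F.Nonempty) : betaInf F 1 = 1 := by
  rw [betaInf, betaExt_one, hF.image_const, csInf_singleton]

lemma betaInf_mem_RMin (hF : F.Nonempty) : betaInf F ∈ RMin X := by
  refine ⟨?_, fun f c => ?_, fun f g => ?_, fun f c => ?_⟩
  · exact betaInf_one hF
  · exact betaInf_of_betaExt_eq_comp hF (continuous_add_const c) add_left_mono
      (betaExt_add_const f c)
  · refine le_antisymm (le_min (betaInf_mono hF fun p => ?_) (betaInf_mono hF fun p => ?_))
      (le_betaInf hF fun p hp => ?_) <;> rw [betaExt_inf]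
    exacts [min_le_left _ _, min_le_right _ _, min_le_min (betaInf_le hp) (betaInf_le hp)]
  · exact betaInf_of_betaExt_eq_comp hF (continuous_id.max continuous_const)
      (fun _ _ h => max_le_max_right c h) (betaExt_sup_const f c)

lemma betaSupport_betaInf (hF : IsClosed F) : betaSupport (betaInf F) = F := by
  refine Subset.antisymm (fun p hp => ?_) fun p hpF O hO hpO => ?_
  · by_contra hpF
    obtain ⟨f, g, hfg, hne⟩ := hp Fᶜ hF.isOpen_compl hpF
    exact hne (congrArg sInf (image_congr fun q hq => hfg q (not_not_intro hq)))
  · obtain ⟨φ, hφp, hφO, -⟩ := exists_continuous_zero_one_of_isClosed isClosed_singleton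
      hO.isClosed_compl (disjoint_singleton_left.2 (not_not_intro hpO))
    refine ⟨restrictStoneCech φ, 1, fun q hq => ?_, (lt_of_le_of_lt (betaInf_le hpF) ?_).ne⟩
    · rw [betaExt_restrictStoneCech, betaExt_one]
      exact hφO hq
    · rw [betaExt_restrictStoneCech, hφp rfl, betaInf_one ⟨p, hpF⟩]
      exact zero_lt_one

end BetaInf

section Functional

variable {μ : BoundedContinuousFunction X ℝ → ℝ}

lemma BWeaklyAdditive.map_const (hw : BWeaklyAdditive μ) (hn : BNormed μ) (c : ℝ) :
    μ (BoundedContinuousFunction.const X c) = c := by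
  calc μ (BoundedContinuousFunction.const X c)
      = μ (1 + BoundedContinuousFunction.const X (c - 1)) := by congr 1; ext; simp
    _ = c := by rw [hw, hn, add_sub_cancel]

lemma BPreservesMin.monotone (hm : BPreservesMin μ) : Monotone μ := fun f g hfg => by
  simpa [inf_eq_left.mpr hfg] using hm f g

lemma BWeaklyAdditive.map_sub_self (hw : BWeaklyAdditive μ) (g : BoundedContinuousFunction X ℝ) :
    μ (g + BoundedContinuousFunction.const X (-μ g)) = 0 := by
  rw [hw]
  ring

lemma map_smul_of_mem_RMin (hμ : μ ∈ RMin X) {L : ℝ} (hL : 1 ≤ L)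
    (f : BoundedContinuousFunction X ℝ) : μ (L • f) = L * μ f := by
  obtain ⟨hn, hw, hm, hwmax⟩ := hμ
  have hL0 : 0 < L := by linarith
  set t := μ (L • f)
  obtain ⟨s, hts⟩ : ∃ s, t = L * s := ⟨t / L, by field_simp⟩
  have hub : f ≤ (L • f ⊔ BoundedContinuousFunction.const X t)
      + BoundedContinuousFunction.const X (s - t) := by
    refine BoundedContinuousFunction.le_def.2 fun x => ?_
    simp only [BoundedContinuousFunction.coe_add, BoundedContinuousFunction.coe_sup,
      BoundedContinuousFunction.coe_smul, BoundedContinuousFunction.const_apply', Pi.add_apply,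
      Pi.sup_apply, smul_eq_mul]
    rcases le_total (f x) s with h | h
    · linarith [le_max_right (L * f x) t]
    · nlinarith [le_max_left (L * f x) t, mul_nonneg (sub_nonneg.2 hL) (sub_nonneg.2 h)]
  have hlb : (L • f ⊓ BoundedContinuousFunction.const X t)
      + BoundedContinuousFunction.const X (s - t) ≤ f := by
    refine BoundedContinuousFunction.le_def.2 fun x => ?_
    simp only [BoundedContinuousFunction.coe_add, BoundedContinuousFunction.coe_inf,
      BoundedContinuousFunction.coe_smul, BoundedContinuousFunction.const_apply', Pi.add_apply,
      Pi.inf_apply, smul_eq_mul]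
    rcases le_total s (f x) with h | h
    · linarith [min_le_right (L * f x) t]
    · nlinarith [min_le_left (L * f x) t, mul_nonneg (sub_nonneg.2 hL) (sub_nonneg.2 h)]
  have h₁ := hm.monotone hub
  have h₂ := hm.monotone hlb
  rw [hw, hwmax, max_self] at h₁
  rw [hw, hm, hw.map_const hn, min_self] at h₂
  rw [hts, show μ f = s by linarith]

lemma exists_betaExt_le_and_le_betaExt_of_mem_RMin (hμ : μ ∈ RMin X)
    (f g : BoundedContinuousFunction X ℝ) :
    ∃ p, betaExt f p ≤ μ f ∧ μ g ≤ betaExt g p := by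
  obtain ⟨hn, hw, hm, hwmax⟩ := hμ
  by_contra! h
  -- by compactness of `βX` the two alternatives of `h` hold with a uniform margin `ε`
  obtain ⟨ε, hε, hsep⟩ := isCompact_univ.exists_forall_le'
    (((continuous_betaExt f).sub continuous_const).max
      (continuous_const.sub (continuous_betaExt g))).continuousOn
    (a := 0) fun p _ => by
      rcases le_or_gt (betaExt f p) (μ f) with hp | hp
      · exact lt_max_of_lt_right (sub_pos.2 (h p hp))
      · exact lt_max_of_lt_left (sub_pos.2 hp)
  set c := μ g - ε
  set L := max 1 ((‖g‖ - c) / ε)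
  have hL : 1 ≤ L := le_max_left _ _
  have hLε : ‖g‖ - c ≤ L * ε := (div_le_iff₀ hε).1 (le_max_right _ _)
  set k := (L • f + BoundedContinuousFunction.const X (c - L * μ f))
    ⊔ BoundedContinuousFunction.const X c
  have hμk : μ k = c := by
    rw [hwmax, hw, map_smul_of_mem_RMin ⟨hn, hw, hm, hwmax⟩ hL, add_sub_cancel, max_self]
  -- `k` is pushed above `‖g‖` wherever `βf ≥ μ f + ε`, and elsewhere `g ≤ c`
  have hgk : g ≤ k := by
    refine BoundedContinuousFunction.le_def.2 fun x => ?_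
    simp only [k, BoundedContinuousFunction.coe_add, BoundedContinuousFunction.coe_sup,
      BoundedContinuousFunction.coe_smul, BoundedContinuousFunction.const_apply', Pi.add_apply,
      Pi.sup_apply, smul_eq_mul]
    have hx := hsep (stoneCechUnit x) (mem_univ _)
    simp only [Pi.sub_apply, betaExt_stoneCechUnit, le_max_iff] at hx
    rcases hx with hx | hx
    · have : ‖g‖ ≤ L * f x + (c - L * μ f) := by nlinarith
      exact le_max_of_le_left ((le_abs_self _).trans (g.norm_coe_le_norm x) |>.trans this)
    · exact le_max_of_le_right (by linarith)
  have := hm.monotone hgk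
  linarith

lemma exists_superlevel_subset_inter (hw : BWeaklyAdditive μ) (hm : BPreservesMin μ)
    (g₁ g₂ : BoundedContinuousFunction X ℝ) : ∃ h : BoundedContinuousFunction X ℝ,
      {p | μ h ≤ betaExt h p} ⊆ {p | μ g₁ ≤ betaExt g₁ p} ∩ {p | μ g₂ ≤ betaExt g₂ p} := by
  set h := (g₁ + BoundedContinuousFunction.const X (-μ g₁))
    ⊓ (g₂ + BoundedContinuousFunction.const X (-μ g₂))
  have hμh : μ h = 0 := by rw [hm, hw.map_sub_self, hw.map_sub_self, min_self]
  refine ⟨h, fun p hp => ?_⟩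
  replace hp : 0 ≤ betaExt h p := hμh ▸ hp
  simp only [h, betaExt_inf, betaExt_add_const, le_min_iff] at hp
  exact ⟨show μ g₁ ≤ betaExt g₁ p by linarith [hp.1], show μ g₂ ≤ betaExt g₂ p by linarith [hp.2]⟩

lemma exists_eq_betaInf_of_mem_RMin (hμ : μ ∈ RMin X) :
    ∃ F : Set (StoneCech X), F.Nonempty ∧ IsClosed F ∧ μ = betaInf F := by
  set F := ⋂ g, {p | μ g ≤ betaExt g p}
  have hsuper : ∀ g, IsClosed {p | μ g ≤ betaExt g p} := fun g =>
    isClosed_le continuous_const (continuous_betaExt g)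
  have hbelow : ∀ f, IsClosed {p | betaExt f p ≤ μ f} := fun f =>
    isClosed_le (continuous_betaExt f) continuous_const
  have key : ∀ f, ({p | betaExt f p ≤ μ f} ∩ F).Nonempty := fun f => by
    rw [inter_iInter]
    refine IsCompact.nonempty_iInter_of_directed_nonempty_isCompact_isClosed _ (fun g₁ g₂ => ?_)
      (fun g => exists_betaExt_le_and_le_betaExt_of_mem_RMin hμ f g)
      (fun g => ((hbelow f).inter (hsuper g)).isCompact) (fun g => (hbelow f).inter (hsuper g))
    obtain ⟨h, hh⟩ := exists_superlevel_subset_inter hμ.2.1 hμ.2.2.1 g₁ g₂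
    exact ⟨h, inter_subset_inter_right _ (hh.trans inter_subset_left),
      inter_subset_inter_right _ (hh.trans inter_subset_right)⟩
  refine ⟨F, (key 0).mono inter_subset_right, isClosed_iInter hsuper, funext fun f => ?_⟩
  obtain ⟨p, hpf, hpF⟩ := key f
  exact le_antisymm (le_betaInf ⟨p, hpF⟩ fun q hq => mem_iInter.1 hq f)
    ((betaInf_le hpF).trans hpf)

end Functional

theorem statement10_general (X : Type*) [TopologicalSpace X] :
    (∀ F : Set (StoneCech X), F.Nonempty → IsClosed F →
      (fun f : BoundedContinuousFunction X ℝ => sInf (betaExt f '' F)) ∈ RMin X ∧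
      betaSupport (fun f : BoundedContinuousFunction X ℝ => sInf (betaExt f '' F)) = F) ∧
    (∀ F G : Set (StoneCech X), F.Nonempty → IsClosed F → G.Nonempty → IsClosed G →
      (fun f : BoundedContinuousFunction X ℝ => sInf (betaExt f '' F)) =
        (fun f : BoundedContinuousFunction X ℝ => sInf (betaExt f '' G)) → F = G) ∧
    (∀ μ ∈ RMin X, ∃ F : Set (StoneCech X), F.Nonempty ∧ IsClosed F ∧
      μ = fun f : BoundedContinuousFunction X ℝ => sInf (betaExt f '' F)) ∧
    (∀ F : Set (StoneCech X), F.Nonempty → IsCompact F →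
      F ⊆ Set.range (stoneCechUnit : X → StoneCech X) →
      (fun f : BoundedContinuousFunction X ℝ => sInf (betaExt f '' F)) ∈ RMinC X) ∧
    (∀ μ ∈ RMinC X, ∃ F : Set (StoneCech X), F.Nonempty ∧ IsCompact F ∧
      F ⊆ Set.range (stoneCechUnit : X → StoneCech X) ∧
      μ = fun f : BoundedContinuousFunction X ℝ => sInf (betaExt f '' F)) := by
  refine ⟨fun F hne hF => ⟨betaInf_mem_RMin hne, betaSupport_betaInf hF⟩,
    fun F G _ hF _ hG hFG => ?_, fun μ hμ => exists_eq_betaInf_of_mem_RMin hμ,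
    fun F hne hK hFX => ?_, fun μ hμ => ?_⟩
  · calc F = betaSupport (betaInf F) := (betaSupport_betaInf hF).symm
      _ = betaSupport (betaInf G) := congrArg betaSupport hFG
      _ = G := betaSupport_betaInf hG
  · have hS : betaSupport (betaInf F) = F := betaSupport_betaInf hK.isClosed
    exact ⟨betaInf_mem_RMin hne, hS.symm ▸ hne, hS.symm ▸ hFX⟩
  · obtain ⟨hμ, -, hμX⟩ := hμ
    obtain ⟨F, hne, hF, rfl⟩ := exists_eq_betaInf_of_mem_RMin hμ
    rw [betaSupport_betaInf hF] at hμX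
    exact ⟨F, hne, hF.isCompact, hμX, rfl⟩

/-- for nonempty Tychonoff `X`, the assignment `F ↦ μ_F` with
`μ_F f = inf {βf p : p ∈ F}` is a bijection from the nonempty closed subsets of `βX` onto
`R_min(X)` with `S(μ_F) = F`, restricting to a bijection from the nonempty compact subsets
of `η(X)` onto `R_min(X)_c`. -/
theorem statement10 (X : Type*) [TopologicalSpace X] [T35Space X] [Nonempty X] :
    (∀ F : Set (StoneCech X), F.Nonempty → IsClosed F →
      (fun f : BoundedContinuousFunction X ℝ => sInf (betaExt f '' F)) ∈ RMin X ∧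
      betaSupport (fun f : BoundedContinuousFunction X ℝ => sInf (betaExt f '' F)) = F) ∧
    (∀ F G : Set (StoneCech X), F.Nonempty → IsClosed F → G.Nonempty → IsClosed G →
      (fun f : BoundedContinuousFunction X ℝ => sInf (betaExt f '' F)) =
        (fun f : BoundedContinuousFunction X ℝ => sInf (betaExt f '' G)) → F = G) ∧
    (∀ μ ∈ RMin X, ∃ F : Set (StoneCech X), F.Nonempty ∧ IsClosed F ∧
      μ = fun f : BoundedContinuousFunction X ℝ => sInf (betaExt f '' F)) ∧
    (∀ F : Set (StoneCech X), F.Nonempty → IsCompact F →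
      F ⊆ Set.range (stoneCechUnit : X → StoneCech X) →
      (fun f : BoundedContinuousFunction X ℝ => sInf (betaExt f '' F)) ∈ RMinC X) ∧
    (∀ μ ∈ RMinC X, ∃ F : Set (StoneCech X), F.Nonempty ∧ IsCompact F ∧
      F ⊆ Set.range (stoneCechUnit : X → StoneCech X) ∧
      μ = fun f : BoundedContinuousFunction X ℝ => sInf (betaExt f '' F)) :=
  statement10_general X
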